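/- arXiv:1107.2253 — 4 statements merged into one kernel-verified Lean document; each statement's English description precedes it below -/
import Mathlib

section
/- For the Barndorff-Nielsen density f(ξ₁,ξ₂) = (1/(2√π))(1+ξ₁²)^{-3/2} exp(−ξ₁² − ξ₂²/(4(1+ξ₁²))), the moment generating function G(u₁,u₂) = ∫_{ℝ²} exp(u₁ξ₁+u₂ξ₂) f(ξ) dξ is finite if |u₂| < 1 (for any u₁ ∈ ℝ). -/
open MeasureTheory Real
open scoped ENNReal

noncomputable def BNdensity (ξ : ℝ × ℝ) : ℝ :=
  (1 / (2 * Real.sqrt π)) * (1 + ξ.1 ^ 2) ^ (-(3 : ℝ) / 2) *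
    Real.exp (-ξ.1 ^ 2 - ξ.2 ^ 2 / (4 * (1 + ξ.1 ^ 2)))

lemma quarter_one_add_sq_le_exp {t : ℝ} (ht : 0 ≤ t) : (1 + t ^ 2) / 4 ≤ Real.exp t := by
  have he : Real.exp (t / 2) * Real.exp (t / 2) = Real.exp t := by
    rw [← Real.exp_add]; ring_nf
  have h1 : t / 2 + 1 ≤ Real.exp (t / 2) := Real.add_one_le_exp _
  nlinarith [Real.exp_pos (t / 2), sq_nonneg t]

lemma integrable_exp_neg_mul_abs {δ : ℝ} (hδ : 0 < δ) :
    Integrable (fun y : ℝ => Real.exp (-(δ * |y|))) := by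
  set c : ℝ := min 1 (δ ^ 2) with hc_def
  have hc : 0 < c := lt_min one_pos (by positivity)
  have hbound : ∀ y : ℝ, Real.exp (-(δ * |y|)) ≤ (4 / c) * (1 + y ^ 2)⁻¹ := by
    intro y
    have h0 : 0 ≤ δ * |y| := by positivity
    have hkey : c * (1 + y ^ 2) ≤ 4 * Real.exp (δ * |y|) := by
      have h1 : c * (1 + y ^ 2) ≤ 1 + (δ * |y|) ^ 2 := by
        rcases le_total δ 1 with hd | hd
        · have : c ≤ δ ^ 2 := min_le_right _ _
          have h2 : δ ^ 2 * y ^ 2 = (δ * |y|) ^ 2 := by rw [mul_pow, sq_abs]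
          nlinarith [sq_nonneg y, sq_nonneg (δ * |y|)]
        · have : c ≤ 1 := min_le_left _ _
          have hd2 : 1 ≤ δ ^ 2 := by nlinarith
          have h2 : y ^ 2 ≤ (δ * |y|) ^ 2 := by
            rw [mul_pow, sq_abs]; nlinarith [sq_nonneg y]
          nlinarith [sq_nonneg y]
      have h2 := quarter_one_add_sq_le_exp h0
      linarith
    have hpos : (0:ℝ) < 1 + y ^ 2 := by positivity
    rw [Real.exp_neg, inv_eq_one_div,
      show (4 / c) * (1 + y ^ 2)⁻¹ = 4 / (c * (1 + y ^ 2)) by field_simp,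
      div_le_div_iff₀ (Real.exp_pos _) (by positivity)]
    linarith
  refine (integrable_inv_one_add_sq.const_mul (4 / c)).mono' ?_
    (Filter.Eventually.of_forall fun y => ?_)
  · exact (Real.measurable_exp.comp ((measurable_const.mul measurable_abs).neg)).aestronglyMeasurable
  · rw [Real.norm_eq_abs, abs_of_nonneg (Real.exp_nonneg _)]
    exact hbound y

lemma integrable_exp_linear_sub_sq (u c : ℝ) (hc : 0 < c) :
    Integrable (fun x : ℝ => Real.exp (u * x - c * x ^ 2)) := by
  have key : ∀ x : ℝ, Real.exp (u * x - c * x ^ 2)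
      = Real.exp (u ^ 2 / (4 * c)) * Real.exp (-c * (x - u / (2 * c)) ^ 2) := by
    intro x
    rw [← Real.exp_add]
    congr 1
    field_simp
    ring
  simp_rw [key]
  exact ((integrable_exp_neg_mul_sq hc).comp_sub_right (u / (2 * c))).const_mul _

theorem BN_mgf_finite_on_strip (u₁ u₂ : ℝ) (h : |u₂| < 1) :
    ∫⁻ ξ : ℝ × ℝ, ENNReal.ofReal (Real.exp (u₁ * ξ.1 + u₂ * ξ.2) * BNdensity ξ) < ⊤ := by
  set s : ℝ := (1 + |u₂|) / 2 with hs_def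
  set δ : ℝ := (1 - |u₂|) / 2 with hδ_def
  have hu₂ : 0 ≤ |u₂| := abs_nonneg _
  have hδ : 0 < δ := by rw [hδ_def]; linarith
  have hs : 0 < s := by rw [hs_def]; linarith
  have hs1 : s < 1 := by rw [hs_def]; linarith
  have hss : s ^ 2 < 1 := by nlinarith
  have hc : 0 < 1 - s ^ 2 := by linarith
  set F : ℝ → ℝ := fun x =>
    (1 / (2 * Real.sqrt π)) * Real.exp (s ^ 2) * Real.exp (u₁ * x - (1 - s ^ 2) * x ^ 2)
    with hF_def
  set G : ℝ → ℝ := fun y => Real.exp (-(δ * |y|)) with hG_def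
  have hF : Integrable F := ((integrable_exp_linear_sub_sq u₁ _ hc).const_mul _)
  have hG : Integrable G := integrable_exp_neg_mul_abs hδ
  have hFG : Integrable (fun ξ : ℝ × ℝ => F ξ.1 * G ξ.2) := hF.mul_prod hG
  have hπ : 0 < Real.sqrt π := Real.sqrt_pos.mpr Real.pi_pos
  have hbound : ∀ ξ : ℝ × ℝ,
      Real.exp (u₁ * ξ.1 + u₂ * ξ.2) * BNdensity ξ ≤ F ξ.1 * G ξ.2 := by
    rintro ⟨x, y⟩
    have ha : (1 : ℝ) ≤ 1 + x ^ 2 := by nlinarith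
    have ha0 : (0 : ℝ) < 1 + x ^ 2 := by linarith
    dsimp [BNdensity, hF_def, hG_def]
    have lhs_eq : Real.exp (u₁ * x + u₂ * y) *
        ((1 / (2 * Real.sqrt π)) * (1 + x ^ 2) ^ (-(3 : ℝ) / 2) *
          Real.exp (-x ^ 2 - y ^ 2 / (4 * (1 + x ^ 2))))
        = (1 / (2 * Real.sqrt π)) * ((1 + x ^ 2) ^ (-(3 : ℝ) / 2) *
          Real.exp (u₁ * x + u₂ * y + (-x ^ 2 - y ^ 2 / (4 * (1 + x ^ 2))))) := by
      rw [Real.exp_add (u₁ * x + u₂ * y) (-x ^ 2 - y ^ 2 / (4 * (1 + x ^ 2)))]; ring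
    have rhs_eq : (1 / (2 * Real.sqrt π)) * Real.exp (s ^ 2) *
          Real.exp (u₁ * x - (1 - s ^ 2) * x ^ 2) * Real.exp (-(δ * |y|))
        = (1 / (2 * Real.sqrt π)) * (1 *
          Real.exp (s ^ 2 + (u₁ * x - (1 - s ^ 2) * x ^ 2) + -(δ * |y|))) := by
      rw [Real.exp_add (s ^ 2 + (u₁ * x - (1 - s ^ 2) * x ^ 2)) (-(δ * |y|)),
        Real.exp_add (s ^ 2) (u₁ * x - (1 - s ^ 2) * x ^ 2)]; ring
    rw [lhs_eq, rhs_eq]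
    have hrpow : ((1 : ℝ) + x ^ 2) ^ (-(3 : ℝ) / 2) ≤ 1 :=
      Real.rpow_le_one_of_one_le_of_nonpos ha (by norm_num)
    have hrpow0 : (0 : ℝ) ≤ ((1 : ℝ) + x ^ 2) ^ (-(3 : ℝ) / 2) :=
      (Real.rpow_pos_of_pos ha0 _).le
    have hexp : u₁ * x + u₂ * y + (-x ^ 2 - y ^ 2 / (4 * (1 + x ^ 2)))
        ≤ s ^ 2 + (u₁ * x - (1 - s ^ 2) * x ^ 2) + -(δ * |y|) := by
      have h1 : u₂ * y ≤ |u₂| * |y| := by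
        calc u₂ * y ≤ |u₂ * y| := le_abs_self _
        _ = |u₂| * |y| := abs_mul _ _
      have h2 : s * |y| - s ^ 2 * (1 + x ^ 2) ≤ y ^ 2 / (4 * (1 + x ^ 2)) := by
        rw [le_div_iff₀ (by positivity)]
        nlinarith [sq_nonneg (|y| - 2 * s * (1 + x ^ 2)), sq_abs y]
      have h3 : |u₂| * |y| + δ * |y| = s * |y| := by
        rw [← add_mul]; congr 1; rw [hs_def, hδ_def]; ring
      nlinarith [abs_nonneg y]
    refine mul_le_mul_of_nonneg_left ?_ (by positivity)
    exact mul_le_mul hrpow (Real.exp_le_exp.mpr hexp) (Real.exp_nonneg _) one_pos.le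
  have hpos : ∀ ξ : ℝ × ℝ, 0 ≤ Real.exp (u₁ * ξ.1 + u₂ * ξ.2) * BNdensity ξ := by
    rintro ⟨x, y⟩
    have ha0 : (0 : ℝ) < 1 + x ^ 2 := by nlinarith
    dsimp [BNdensity]
    positivity
  have hmeas : AEStronglyMeasurable
      (fun ξ : ℝ × ℝ => Real.exp (u₁ * ξ.1 + u₂ * ξ.2) * BNdensity ξ) volume := by
    apply Measurable.aestronglyMeasurable
    unfold BNdensity
    fun_prop
  have hint : Integrable (fun ξ : ℝ × ℝ => Real.exp (u₁ * ξ.1 + u₂ * ξ.2) * BNdensity ξ) := by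
    refine hFG.mono' hmeas (Filter.Eventually.of_forall fun ξ => ?_)
    rw [Real.norm_eq_abs, abs_of_nonneg (hpos ξ)]
    exact hbound ξ
  exact hint.lintegral_lt_top
end

section
/- For the Barndorff-Nielsen density f, the moment generating function G(u₁,u₂) is infinite whenever |u₂| > 1, and also whenever |u₂| = 1 and u₁ ≠ 0 with sign condition: specifically if u₂² = 1 and u₁ ≠ 0 then ∫_ℝ (1+ξ₁²)^{-1} exp(u₁ξ₁) dξ₁ = ∞. Hence the domain of G is exactly (ℝ × (−1,1)) ∪ {(0,1),(0,−1)}. -/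
open MeasureTheory Real Set
open scoped ENNReal

/-!
Integrating out `ξ₂` is a Gaussian integral (variance `2(1 + ξ₁²)`), which leaves
`G(u) = e^{u₂²} ∫ (1 + x²)⁻¹ exp(u₁x - (1 - u₂²)x²) dx`. For `u₂² < 1` the Gaussian factor makes
this integrable, and for `u = (0, ±1)` the integrand is the Cauchy density. In every other case the
integrand tends to `∞` along a half-line, because `exp` beats the polynomial `1 + x²`.
-/

open Filter

lemma lintegral_ofReal_eq_top_of_one_le_on {α : Type*} [MeasurableSpace α] {μ : Measure α}
    {s : Set α} (hs : MeasurableSet s) (hμs : μ s = ⊤) {f : α → ℝ} (hf : ∀ x ∈ s, 1 ≤ f x) :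
    ∫⁻ x, ENNReal.ofReal (f x) ∂μ = ⊤ := by
  rw [eq_top_iff, ← hμs, ← setLIntegral_one]
  calc ∫⁻ _ in s, 1 ∂μ ≤ ∫⁻ x in s, ENNReal.ofReal (f x) ∂μ :=
        setLIntegral_mono' hs fun x hx => ENNReal.one_le_ofReal.mpr (hf x hx)
    _ ≤ ∫⁻ x, ENNReal.ofReal (f x) ∂μ := setLIntegral_le_lintegral _ _

lemma lintegral_ofReal_eq_top_of_tendsto_atTop {f : ℝ → ℝ} (hf : Tendsto f atTop atTop) :
    ∫⁻ x, ENNReal.ofReal (f x) = ⊤ := by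
  obtain ⟨M, hM⟩ := eventually_atTop.mp (hf.eventually_ge_atTop 1)
  exact lintegral_ofReal_eq_top_of_one_le_on measurableSet_Ici volume_Ici hM

lemma lintegral_ofReal_eq_top_of_tendsto_atBot {f : ℝ → ℝ} (hf : Tendsto f atBot atTop) :
    ∫⁻ x, ENNReal.ofReal (f x) = ⊤ := by
  obtain ⟨M, hM⟩ := eventually_atBot.mp (hf.eventually_ge_atTop 1)
  exact lintegral_ofReal_eq_top_of_one_le_on measurableSet_Iic volume_Iic hM

lemma tendsto_inv_one_add_sq_mul_exp_atTop {b : ℝ} (hb : 0 < b) :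
    Tendsto (fun x : ℝ => (1 + x ^ 2)⁻¹ * exp (b * x)) atTop atTop := by
  have hlim : Tendsto (fun x : ℝ => 2⁻¹ * (exp (b * x) / x ^ (2 : ℝ))) atTop atTop :=
    (tendsto_exp_mul_div_rpow_atTop 2 b hb).const_mul_atTop (by norm_num)
  refine tendsto_atTop_mono' _ ?_ hlim
  filter_upwards [eventually_ge_atTop 1] with x hx
  have hx2 : 1 + x ^ 2 ≤ 2 * x ^ 2 := by nlinarith
  rw [rpow_two, div_eq_mul_inv, mul_left_comm, ← mul_inv, mul_comm (exp _)]
  gcongr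

lemma lintegral_inv_one_add_sq_mul_exp_eq_top {a : ℝ} (ha : a ≠ 0) :
    ∫⁻ x, ENNReal.ofReal ((1 + x ^ 2)⁻¹ * exp (a * x)) = ⊤ := by
  rcases ha.lt_or_gt with ha | ha
  · refine lintegral_ofReal_eq_top_of_tendsto_atBot ?_
    have := (tendsto_inv_one_add_sq_mul_exp_atTop (neg_pos.mpr ha)).comp tendsto_neg_atBot_atTop
    simpa [Function.comp_def, neg_mul_neg] using this
  · exact lintegral_ofReal_eq_top_of_tendsto_atTop (tendsto_inv_one_add_sq_mul_exp_atTop ha)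

lemma lintegral_inv_one_add_sq_mul_exp_sub_mul_sq_eq_top (a : ℝ) {c : ℝ} (hc : c < 0) :
    ∫⁻ x, ENNReal.ofReal ((1 + x ^ 2)⁻¹ * exp (a * x - c * x ^ 2)) = ⊤ := by
  refine lintegral_ofReal_eq_top_of_tendsto_atTop <|
    tendsto_atTop_mono' _ ?_ (tendsto_inv_one_add_sq_mul_exp_atTop one_pos)
  filter_upwards [eventually_ge_atTop 0, eventually_ge_atTop ((1 - a) / -c)] with x hx₀ hx
  rw [div_le_iff₀ (neg_pos.mpr hc)] at hx
  gcongr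
  nlinarith

lemma exp_mul_sub_mul_sq_eq {b : ℝ} (hb : b ≠ 0) (u y : ℝ) :
    exp (u * y - b * y ^ 2) = exp (u ^ 2 / (4 * b)) * exp (-b * (y - u / (2 * b)) ^ 2) := by
  rw [← exp_add]
  congr 1
  field_simp
  ring

lemma integrable_exp_mul_sub_mul_sq {b : ℝ} (hb : 0 < b) (u : ℝ) :
    Integrable fun y : ℝ => exp (u * y - b * y ^ 2) := by
  simp_rw [exp_mul_sub_mul_sq_eq hb.ne']
  exact ((integrable_exp_neg_mul_sq hb).comp_sub_right _).const_mul _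

lemma integral_exp_mul_sub_mul_sq {b : ℝ} (hb : 0 < b) (u : ℝ) :
    ∫ y : ℝ, exp (u * y - b * y ^ 2) = exp (u ^ 2 / (4 * b)) * sqrt (π / b) := by
  simp_rw [exp_mul_sub_mul_sq_eq hb.ne']
  rw [integral_const_mul, integral_sub_right_eq_self (fun y => exp (-b * y ^ 2)),
    integral_gaussian]

lemma lintegral_inv_one_add_sq_mul_exp_sub_mul_sq_lt_top_iff (a c : ℝ) :
    ∫⁻ x, ENNReal.ofReal ((1 + x ^ 2)⁻¹ * exp (a * x - c * x ^ 2)) < ⊤ ↔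
      0 < c ∨ c = 0 ∧ a = 0 := by
  constructor
  · intro hfin
    by_contra! hc
    rcases hc.1.lt_or_eq with hc' | rfl
    · exact hfin.ne (lintegral_inv_one_add_sq_mul_exp_sub_mul_sq_eq_top a hc')
    · exact hfin.ne (by simpa using lintegral_inv_one_add_sq_mul_exp_eq_top (hc.2 rfl))
  · rintro (hc | ⟨rfl, rfl⟩)
    · refine Integrable.lintegral_lt_top <|
        (integrable_exp_mul_sub_mul_sq hc a).mono' (by fun_prop) (ae_of_all _ fun x => ?_)
      have hinv : (1 + x ^ 2)⁻¹ ≤ 1 := inv_le_one_of_one_le₀ (by nlinarith)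
      rw [norm_of_nonneg (by positivity)]
      exact mul_le_of_le_one_left (exp_nonneg _) hinv
    · simpa using integrable_inv_one_add_sq.lintegral_lt_top

lemma exp_mul_add_mul_mul_BNdensity (u₁ u₂ x y : ℝ) :
    exp (u₁ * x + u₂ * y) * BNdensity (x, y) =
      1 / (2 * sqrt π) * (1 + x ^ 2) ^ (-(3 : ℝ) / 2) * exp (u₁ * x - x ^ 2) *
        exp (u₂ * y - (4 * (1 + x ^ 2))⁻¹ * y ^ 2) := by
  have hexp : exp (u₁ * x - x ^ 2) * exp (u₂ * y - (4 * (1 + x ^ 2))⁻¹ * y ^ 2) =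
      exp (u₁ * x + u₂ * y) * exp (-x ^ 2 - y ^ 2 / (4 * (1 + x ^ 2))) := by
    rw [← exp_add, ← exp_add]
    congr 1
    ring
  rw [BNdensity, mul_assoc _ (exp _), hexp]
  ring

lemma lintegral_exp_mul_add_mul_mul_BNdensity_snd (u₁ u₂ x : ℝ) :
    ∫⁻ y, ENNReal.ofReal (exp (u₁ * x + u₂ * y) * BNdensity (x, y)) =
      ENNReal.ofReal (exp (u₂ ^ 2) * ((1 + x ^ 2)⁻¹ * exp (u₁ * x - (1 - u₂ ^ 2) * x ^ 2))) := by
  set s := 1 + x ^ 2 with hs_def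
  have hs : 0 < s := by positivity
  have hb : 0 < (4 * s)⁻¹ := by positivity
  simp_rw [exp_mul_add_mul_mul_BNdensity]
  rw [← ofReal_integral_eq_lintegral_ofReal
      ((integrable_exp_mul_sub_mul_sq hb u₂).const_mul _) (ae_of_all _ fun y => by positivity),
    integral_const_mul, integral_exp_mul_sub_mul_sq hb]
  congr 1
  have hsqrt : sqrt (π / (4 * s)⁻¹) = 2 * sqrt π * sqrt s := by
    rw [div_inv_eq_mul, mul_comm, mul_assoc, sqrt_mul (by norm_num), sqrt_mul hs.le,
      show (4 : ℝ) = 2 ^ 2 by norm_num, sqrt_sq (by norm_num)]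
    ring
  have hpow : s ^ (-(3 : ℝ) / 2) * sqrt s = s⁻¹ := by
    rw [sqrt_eq_rpow, ← rpow_add hs, ← rpow_neg_one]
    norm_num
  have hexp : exp (u₁ * x - x ^ 2) * exp (u₂ ^ 2 / (4 * (4 * s)⁻¹)) =
      exp (u₂ ^ 2) * exp (u₁ * x - (1 - u₂ ^ 2) * x ^ 2) := by
    rw [← exp_add, ← exp_add, hs_def]
    congr 1
    field_simp
    ring
  calc _ = s ^ (-(3 : ℝ) / 2) * sqrt s *
        (exp (u₁ * x - x ^ 2) * exp (u₂ ^ 2 / (4 * (4 * s)⁻¹))) * (2 * sqrt π / (2 * sqrt π)) := by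
        rw [hsqrt]; ring
    _ = _ := by rw [hpow, hexp, div_self (by positivity)]; ring

lemma lintegral_exp_mul_BNdensity (u : ℝ × ℝ) :
    ∫⁻ ξ : ℝ × ℝ, ENNReal.ofReal (exp (u.1 * ξ.1 + u.2 * ξ.2) * BNdensity ξ) =
      ENNReal.ofReal (exp (u.2 ^ 2)) *
        ∫⁻ x, ENNReal.ofReal ((1 + x ^ 2)⁻¹ * exp (u.1 * x - (1 - u.2 ^ 2) * x ^ 2)) := by
  have hmeas : Measurable fun ξ : ℝ × ℝ =>
      ENNReal.ofReal (exp (u.1 * ξ.1 + u.2 * ξ.2) * BNdensity ξ) := by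
    unfold BNdensity
    fun_prop
  rw [Measure.volume_eq_prod, lintegral_prod _ hmeas.aemeasurable,
    ← lintegral_const_mul' _ _ ENNReal.ofReal_ne_top]
  refine lintegral_congr fun x => ?_
  rw [lintegral_exp_mul_add_mul_mul_BNdensity_snd, ENNReal.ofReal_mul (exp_nonneg _)]

theorem BN_mgf_domain :
    (∀ u₁ : ℝ, u₁ ≠ 0 →
      ∫⁻ x : ℝ, ENNReal.ofReal ((1 + x ^ 2)⁻¹ * Real.exp (u₁ * x)) = ⊤) ∧
    {u : ℝ × ℝ |
        ∫⁻ ξ : ℝ × ℝ, ENNReal.ofReal (Real.exp (u.1 * ξ.1 + u.2 * ξ.2) * BNdensity ξ) < ⊤}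
      = (univ ×ˢ Ioo (-1 : ℝ) 1) ∪ {((0 : ℝ), (1 : ℝ)), ((0 : ℝ), (-1 : ℝ))} := by
  refine ⟨fun u₁ hu₁ => lintegral_inv_one_add_sq_mul_exp_eq_top hu₁, ?_⟩
  ext ⟨u₁, u₂⟩
  have hmul_lt_top : ∀ I : ℝ≥0∞, ENNReal.ofReal (exp (u₂ ^ 2)) * I < ⊤ ↔ I < ⊤ := by
    simp [lt_top_iff_ne_top, ENNReal.mul_eq_top, exp_pos]
  rw [mem_ofPred_eq, lintegral_exp_mul_BNdensity, hmul_lt_top,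
    lintegral_inv_one_add_sq_mul_exp_sub_mul_sq_lt_top_iff, sub_pos, sq_lt_one_iff_abs_lt_one,
    abs_lt, sub_eq_zero, eq_comm, sq_eq_one_iff]
  simp only [mem_union, mem_prod, mem_univ, true_and, mem_Ioo, mem_insert_iff, mem_singleton_iff,
    Prod.mk.injEq]
  tauto
end

section
/- There exists a probability measure μ on ℝ² with moment generating function G and domain V = {u : G(u) < ∞} ⊇ (ℝ × (−1,1)) ∪ {(0,1)}, and a continuous curve c : [0,1] → V with c(1) = (0,1), such that G(c(1)) < ∞ but lim_{t↑1} G(c(t)) = ∞. -/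
open MeasureTheory Real Set Filter Topology
open scoped ENNReal

/-!
A discrete version of Barndorff-Nielsen's example: take `μ` proportional to
`∑ₙ e^{-n²} (n+1)⁻² δ_{(n, n²)}`, so that `G(u)` is proportional to
`∑ₙ e^{u₁ n - (1 - u₂) n²} / (n+1)²`. For `u₂ < 1` the exponent is bounded by
`u₁² / (4 (1 - u₂))`, and at `(0, 1)` the series is `∑ₙ (n+1)⁻²`; both are finite.
Along `c(t) = ((1 - t)^{1/4}, t)` put `r = (1 - t)^{-1/4}`: the single term `n = ⌊r²⌋`
is at least `e^{r-2} / (4 r⁴)`, which tends to infinity as `t → 1`.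
-/

noncomputable def expMoment (μ : Measure (ℝ × ℝ)) (u : ℝ × ℝ) : ℝ≥0∞ :=
  ∫⁻ ξ, ENNReal.ofReal (exp (u.1 * ξ.1 + u.2 * ξ.2)) ∂μ

lemma expMoment_smul (c : ℝ≥0∞) (μ : Measure (ℝ × ℝ)) (u : ℝ × ℝ) :
    expMoment (c • μ) u = c * expMoment μ u :=
  lintegral_smul_measure c _

lemma expMoment_zero (μ : Measure (ℝ × ℝ)) : expMoment μ 0 = μ univ := by
  simp [expMoment]

lemma mul_add_mul_sq_le (a x : ℝ) {b : ℝ} (hb : b < 0) :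
    a * x + b * x ^ 2 ≤ a ^ 2 / (-4 * b) := by
  rw [le_div_iff₀ (by linarith)]
  nlinarith [sq_nonneg (2 * b * x + a)]

lemma summable_one_div_nat_add_one_sq : Summable fun n : ℕ => 1 / ((n : ℝ) + 1) ^ 2 := by
  simpa using (summable_nat_add_iff 1).2 (Real.summable_one_div_nat_pow.2 one_lt_two)

lemma tsum_ofReal_exp_div_sq_lt_top {f : ℕ → ℝ} {K : ℝ} (hf : ∀ n, f n ≤ K) :
    ∑' n : ℕ, ENNReal.ofReal (exp (f n) / ((n : ℝ) + 1) ^ 2) < ⊤ :=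
  calc ∑' n : ℕ, ENNReal.ofReal (exp (f n) / ((n : ℝ) + 1) ^ 2)
      ≤ ∑' n : ℕ, ENNReal.ofReal (exp K * (1 / ((n : ℝ) + 1) ^ 2)) :=
        ENNReal.tsum_le_tsum fun n => ENNReal.ofReal_le_ofReal <| by
          rw [mul_one_div]; gcongr; exact hf n
    _ = ENNReal.ofReal (∑' n : ℕ, exp K * (1 / ((n : ℝ) + 1) ^ 2)) :=
        (ENNReal.ofReal_tsum_of_nonneg (fun n => by positivity)
          (summable_one_div_nat_add_one_sq.mul_left _)).symm
    _ < ⊤ := ENNReal.ofReal_lt_top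

noncomputable def parabolaMeasure : Measure (ℝ × ℝ) :=
  Measure.sum fun n : ℕ =>
    ENNReal.ofReal (exp (-(n : ℝ) ^ 2) / ((n : ℝ) + 1) ^ 2) •
      Measure.dirac ((n : ℝ), (n : ℝ) ^ 2)

noncomputable def parabolaTerm (u : ℝ × ℝ) (n : ℕ) : ℝ :=
  exp (u.1 * n + (u.2 - 1) * n ^ 2) / ((n : ℝ) + 1) ^ 2

lemma expMoment_parabolaMeasure (u : ℝ × ℝ) :
    expMoment parabolaMeasure u = ∑' n, ENNReal.ofReal (parabolaTerm u n) := by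
  simp only [expMoment, parabolaMeasure, lintegral_sum_measure, lintegral_smul_measure,
    lintegral_dirac, smul_eq_mul]
  congr 1 with n
  rw [← ENNReal.ofReal_mul (by positivity), div_mul_eq_mul_div, ← exp_add, parabolaTerm]
  ring_nf

lemma expMoment_parabolaMeasure_lt_top {u : ℝ × ℝ} (hu : u.2 < 1) :
    expMoment parabolaMeasure u < ⊤ := by
  rw [expMoment_parabolaMeasure]
  exact tsum_ofReal_exp_div_sq_lt_top fun n => mul_add_mul_sq_le u.1 n (sub_neg.2 hu)

lemma expMoment_parabolaMeasure_zero_one : expMoment parabolaMeasure (0, 1) < ⊤ := by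
  rw [expMoment_parabolaMeasure]
  exact tsum_ofReal_exp_div_sq_lt_top (K := 0) fun n => by simp

instance : IsFiniteMeasure parabolaMeasure :=
  ⟨by simpa [expMoment_zero] using expMoment_parabolaMeasure_lt_top (u := 0) zero_lt_one⟩

instance : NeZero parabolaMeasure :=
  ⟨by simpa [parabolaMeasure, Measure.sum_eq_zero] using ⟨0, by positivity⟩⟩

lemma exp_sub_two_div_le_parabolaTerm {r : ℝ} (hr : 1 ≤ r) :
    exp (r - 2) / (4 * r ^ 4) ≤ parabolaTerm (r⁻¹, 1 - (r ^ 4)⁻¹) ⌊r ^ 2⌋₊ := by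
  set n := ⌊r ^ 2⌋₊
  have hn_le : (n : ℝ) ≤ r ^ 2 := Nat.floor_le (by positivity)
  have hn_lt : r ^ 2 < n + 1 := Nat.lt_floor_add_one _
  have hr0 : 0 < r := by linarith
  have hlin : r - 1 ≤ r⁻¹ * n := by
    rw [← div_eq_inv_mul, le_div_iff₀ hr0]
    nlinarith
  have hquad : (r ^ 4)⁻¹ * n ^ 2 ≤ 1 := by
    rw [← div_eq_inv_mul, div_le_one (by positivity)]
    nlinarith [Nat.cast_nonneg (α := ℝ) n]
  have hden : ((n : ℝ) + 1) ^ 2 ≤ 4 * r ^ 4 :=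
    calc ((n : ℝ) + 1) ^ 2 ≤ (2 * r ^ 2) ^ 2 := by gcongr; nlinarith
      _ = 4 * r ^ 4 := by ring
  refine div_le_div₀ (exp_pos _).le (exp_le_exp.2 ?_) (by positivity) hden
  linarith

lemma tendsto_exp_sub_two_div_atTop :
    Tendsto (fun r : ℝ => exp (r - 2) / (4 * r ^ 4)) atTop atTop := by
  refine ((tendsto_exp_div_pow_atTop 4).const_mul_atTop
    (show (0 : ℝ) < exp (-2) / 4 by positivity)).congr fun r => ?_
  rw [sub_eq_add_neg, exp_add]
  ring

lemma tendsto_expMoment_parabolaMeasure_atTop :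
    Tendsto (fun r : ℝ => expMoment parabolaMeasure (r⁻¹, 1 - (r ^ 4)⁻¹)) atTop (𝓝 ⊤) := by
  refine tendsto_nhds_top_mono
    (ENNReal.tendsto_ofReal_atTop.comp tendsto_exp_sub_two_div_atTop) ?_
  filter_upwards [eventually_ge_atTop 1] with r hr
  rw [expMoment_parabolaMeasure]
  exact (ENNReal.ofReal_le_ofReal (exp_sub_two_div_le_parabolaTerm hr)).trans
    (ENNReal.le_tsum _)

noncomputable def blowupCurve (t : ℝ) : ℝ × ℝ := (√(√(1 - t)), t)

lemma continuous_blowupCurve : Continuous blowupCurve := by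
  unfold blowupCurve
  fun_prop

lemma blowupCurve_one : blowupCurve 1 = (0, 1) := by
  simp [blowupCurve]

lemma tendsto_inv_one_sub_nhdsLT_one : Tendsto (fun t : ℝ => (1 - t)⁻¹) (𝓝[<] 1) atTop := by
  refine tendsto_inv_nhdsGT_zero.comp (tendsto_nhdsWithin_iff.2 ⟨?_, ?_⟩)
  · exact tendsto_nhdsWithin_of_tendsto_nhds
      (by simpa using (continuous_sub_left (1 : ℝ)).tendsto 1)
  · filter_upwards [self_mem_nhdsWithin] with t (ht : t < 1)
    exact sub_pos.2 ht

lemma tendsto_expMoment_parabolaMeasure_blowupCurve :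
    Tendsto (fun t => expMoment parabolaMeasure (blowupCurve t)) (𝓝[<] 1) (𝓝 ⊤) := by
  refine (tendsto_expMoment_parabolaMeasure_atTop.comp
      (tendsto_sqrt_atTop.comp (tendsto_sqrt_atTop.comp tendsto_inv_one_sub_nhdsLT_one))).congr' ?_
  filter_upwards [self_mem_nhdsWithin] with t (ht : t < 1)
  have h4 : (√√(1 - t)) ^ 4 = 1 - t := by
    rw [show 4 = 2 * 2 from rfl, pow_mul, sq_sqrt (sqrt_nonneg _), sq_sqrt (by linarith)]
  simp [blowupCurve, h4, sqrt_inv]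

theorem exists_mgf_finite_with_blowup_curve :
    ∃ μ : Measure (ℝ × ℝ), IsProbabilityMeasure μ ∧
      ∀ G : ℝ × ℝ → ℝ≥0∞,
        (∀ u, G u = ∫⁻ ξ, ENNReal.ofReal (Real.exp (u.1 * ξ.1 + u.2 * ξ.2)) ∂μ) →
        ((univ ×ˢ Ioo (-1 : ℝ) 1) ∪ {((0 : ℝ), (1 : ℝ))} ⊆ {u | G u < ⊤}) ∧
        ∃ c : ℝ → ℝ × ℝ, ContinuousOn c (Icc 0 1) ∧
          (∀ t ∈ Icc (0 : ℝ) 1, G (c t) < ⊤) ∧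
          c 1 = (0, 1) ∧ G (c 1) < ⊤ ∧
          Tendsto (fun t => G (c t)) (𝓝[Ico (0 : ℝ) 1] 1) (𝓝 ⊤) := by
  set ν := parabolaMeasure
  have hν_ne_zero : (ν univ)⁻¹ ≠ 0 := ENNReal.inv_ne_zero.2 (measure_ne_top ν univ)
  have hν_ne_top : (ν univ)⁻¹ ≠ ⊤ :=
    ENNReal.inv_ne_top.2 (Measure.measure_univ_ne_zero.2 (NeZero.ne ν))
  refine ⟨(ν univ)⁻¹ • ν, inferInstance, fun G hG => ?_⟩
  obtain rfl : G = fun u => (ν univ)⁻¹ * expMoment ν u :=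
    funext fun u => (hG u).trans (expMoment_smul _ _ _)
  have hfin : ∀ u : ℝ × ℝ, u.2 < 1 ∨ u = (0, 1) → (ν univ)⁻¹ * expMoment ν u < ⊤ := by
    rintro u (hu | rfl)
    · exact ENNReal.mul_lt_top hν_ne_top.lt_top (expMoment_parabolaMeasure_lt_top hu)
    · exact ENNReal.mul_lt_top hν_ne_top.lt_top expMoment_parabolaMeasure_zero_one
  refine ⟨?_, blowupCurve, continuous_blowupCurve.continuousOn, fun t ht => hfin _ ?_,
    blowupCurve_one, hfin _ (.inr blowupCurve_one), ?_⟩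
  · rintro u (⟨-, hu⟩ | rfl)
    exacts [hfin u (.inl hu.2), hfin _ (.inr rfl)]
  · rcases ht.2.lt_or_eq with ht | rfl
    exacts [.inl ht, .inr blowupCurve_one]
  · have h := ENNReal.Tendsto.const_mul
      tendsto_expMoment_parabolaMeasure_blowupCurve (.inr hν_ne_top)
    rw [ENNReal.mul_top hν_ne_zero] at h
    exact h.mono_left (nhdsWithin_mono _ fun t ht => ht.2)
end

section
/- There exists a probability measure μ on ℝ⁴ with mgf G and domain of finiteness V', and a continuous curve c : [0,1] → ∂V' (the topological boundary of V') with c([0,1)) ⊂ V' and c(1) ∈ V', such that G(c(1)) < ∞ and lim_{t↑1} G(c(t)) = ∞. -/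
/-!
The measure is discrete, with atoms `(x, x², y, 0)` for `x, y ∈ {1, 2, …}` and weights
proportional to `e^{-x²}/x² · e^{-y}/y²`. Its moment generating function factorises as
`G(u, v, s, r) = C · P(u, v) · R(s)` with `P(u, v) = ∑_x e^{ux + (v-1)x²}/x²` and
`R(s) = ∑_y e^{(s-1)y}/y²`. Since `R` is finite exactly for `s ≤ 1`, every point with `s = 1`
lies on the boundary of the domain. On the curve `(ε, 1 - ε³, 1, 0)`, `ε = 1 - t`, the exponent
`εx - ε³x²` is bounded for each `ε`, so `G` is finite, and `G(0, 1, 1, 0)` is finite because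
`∑ 1/x² < ∞`; but the exponent reaches `1/(4ε)` near `x = 1/(2ε²)`, so `P(ε, 1 - ε³)` grows
like `ε⁴ e^{1/(4ε)} → ∞`.
-/

open MeasureTheory Real Set Filter Topology
open scoped ENNReal

theorem ENNReal.tsum_mul_tsum {α β : Type*} (f : α → ℝ≥0∞) (g : β → ℝ≥0∞) :
    (∑' a, f a) * ∑' b, g b = ∑' p : α × β, f p.1 * g p.2 := by
  simp only [ENNReal.tsum_prod', ENNReal.tsum_mul_left, ENNReal.tsum_mul_right]

namespace MgfBlowup

noncomputable def expSum (f : ℕ → ℝ) : ℝ≥0∞ :=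
  ∑' n, ENNReal.ofReal (exp (f n) / ((n : ℝ) + 1) ^ 2)

theorem le_expSum (f : ℕ → ℝ) (n : ℕ) :
    ENNReal.ofReal (exp (f n) / ((n : ℝ) + 1) ^ 2) ≤ expSum f :=
  ENNReal.le_tsum n

theorem expSum_ne_zero (f : ℕ → ℝ) : expSum f ≠ 0 :=
  (ENNReal.ofReal_pos.mpr (by positivity)).trans_le (le_expSum f 0) |>.ne'

theorem expSum_lt_top {f : ℕ → ℝ} {b : ℝ} (hb : ∀ n, f n ≤ b) : expSum f < ⊤ := by
  have hsum : Summable fun n : ℕ => exp b * (1 / ((n : ℝ) + 1) ^ 2) := by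
    refine Summable.mul_left _ ?_
    exact_mod_cast (summable_nat_add_iff 1).mpr (Real.summable_one_div_nat_pow.mpr one_lt_two)
  calc expSum f ≤ ∑' n : ℕ, ENNReal.ofReal (exp b * (1 / ((n : ℝ) + 1) ^ 2)) := by
        refine ENNReal.tsum_le_tsum fun n => ENNReal.ofReal_le_ofReal ?_
        rw [mul_one_div]
        gcongr
        exact hb n
    _ = ENNReal.ofReal (∑' n : ℕ, exp b * (1 / ((n : ℝ) + 1) ^ 2)) :=
        (ENNReal.ofReal_tsum_of_nonneg (fun n => by positivity) hsum).symm
    _ < ⊤ := ENNReal.ofReal_lt_top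

theorem expSum_eq_top {f : ℕ → ℝ} {c : ℝ} (hc : 0 < c)
    (h : ∀ n, c ≤ exp (f n) / ((n : ℝ) + 1) ^ 2) : expSum f = ⊤ := by
  refine top_le_iff.mp ?_
  calc ⊤ = ∑' _ : ℕ, ENNReal.ofReal c :=
        (ENNReal.tsum_const_eq_top_of_ne_zero (ENNReal.ofReal_pos.mpr hc).ne').symm
    _ ≤ expSum f := ENNReal.tsum_le_tsum fun n => ENNReal.ofReal_le_ofReal (h n)

noncomputable def parabolaSum (u v : ℝ) : ℝ≥0∞ :=
  expSum fun n => u * ((n : ℝ) + 1) + (v - 1) * ((n : ℝ) + 1) ^ 2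

noncomputable def raySum (s : ℝ) : ℝ≥0∞ :=
  expSum fun n => (s - 1) * ((n : ℝ) + 1)

theorem raySum_lt_top {s : ℝ} (hs : s ≤ 1) : raySum s < ⊤ :=
  expSum_lt_top (b := 0) fun n => mul_nonpos_of_nonpos_of_nonneg (by linarith) (by positivity)

theorem raySum_eq_top {s : ℝ} (hs : 1 < s) : raySum s = ⊤ := by
  have hδ : 0 < s - 1 := sub_pos.mpr hs
  refine expSum_eq_top (c := (s - 1) ^ 3 / 6) (by positivity) fun n => ?_
  set y : ℝ := (n : ℝ) + 1
  have hy : 1 ≤ y := by simp [y]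
  have hcube : (s - 1) ^ 3 * y ^ 3 / 6 ≤ exp ((s - 1) * y) := by
    simpa [mul_pow, Nat.factorial] using
      Real.pow_div_factorial_le_exp ((s - 1) * y) (by positivity) 3
  rw [le_div_iff₀ (by positivity)]
  nlinarith [pow_le_pow_right₀ hy (by norm_num : 2 ≤ 3), pow_pos hδ 3]

theorem parabolaSum_lt_top_of_lt_one (u : ℝ) {v : ℝ} (hv : v < 1) : parabolaSum u v < ⊤ := by
  refine expSum_lt_top (b := u ^ 2 / (4 * (1 - v))) fun n => ?_
  rw [le_div_iff₀ (by linarith)]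
  nlinarith [sq_nonneg (u - 2 * (1 - v) * ((n : ℝ) + 1))]

theorem parabolaSum_one_lt_top {u : ℝ} (hu : u ≤ 0) : parabolaSum u 1 < ⊤ :=
  expSum_lt_top (b := 0) fun n => by
    nlinarith [mul_nonpos_of_nonpos_of_nonneg hu (by positivity : (0 : ℝ) ≤ (n : ℝ) + 1)]

theorem parabolaSum_curve_lt_top {ε : ℝ} (hε : 0 ≤ ε) : parabolaSum ε (1 - ε ^ 3) < ⊤ := by
  rcases hε.eq_or_lt with rfl | hε
  · simpa using parabolaSum_one_lt_top le_rfl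
  · exact parabolaSum_lt_top_of_lt_one ε (by linarith [pow_pos hε 3])

theorem parabolaSum_curve_ge {ε : ℝ} (hε₀ : 0 < ε) (hε₁ : ε ≤ 1) :
    ENNReal.ofReal (exp (1 / (4 * ε) - 1) * (4 * ε ^ 4 / 9)) ≤ parabolaSum ε (1 - ε ^ 3) := by
  -- the summand at `x = ⌊1 / (2ε²)⌋ + 1`, next to the maximum of `x ↦ εx - ε³x²`
  set n := ⌊1 / (2 * ε ^ 2)⌋₊
  set x : ℝ := (n : ℝ) + 1
  have hy₀ : 1 < 2 * ε ^ 2 * x := by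
    have := Nat.lt_floor_add_one (1 / (2 * ε ^ 2))
    rwa [div_lt_iff₀' (by positivity)] at this
  have hy₁ : 2 * ε ^ 2 * x ≤ 1 + 2 * ε ^ 2 := by
    have := Nat.floor_le (by positivity : 0 ≤ 1 / (2 * ε ^ 2))
    rw [le_div_iff₀' (by positivity)] at this
    linarith
  have hexp : 1 / (4 * ε) - 1 ≤ ε * x + (1 - ε ^ 3 - 1) * x ^ 2 := by
    have hsq : ε * x + (1 - ε ^ 3 - 1) * x ^ 2 =
        1 / (4 * ε) - (2 * ε ^ 2 * x - 1) ^ 2 / (4 * ε) := by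
      field_simp
      ring
    have hε₄ : ε ^ 4 ≤ ε := pow_le_of_le_one hε₀.le hε₁ (by norm_num)
    have hdefect : (2 * ε ^ 2 * x - 1) ^ 2 / (4 * ε) ≤ 1 := by
      rw [div_le_one (by positivity)]
      nlinarith
    linarith
  have hpow : 4 * ε ^ 4 / 9 ≤ 1 / x ^ 2 := by
    have hy₂ : 2 * ε ^ 2 * x ≤ 3 := by nlinarith [pow_le_one₀ (n := 2) hε₀.le hε₁]
    rw [div_le_div_iff₀ (by norm_num) (by positivity)]
    nlinarith
  refine le_trans (ENNReal.ofReal_le_ofReal ?_) (le_expSum _ n)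
  calc exp (1 / (4 * ε) - 1) * (4 * ε ^ 4 / 9)
      ≤ exp (ε * x + (1 - ε ^ 3 - 1) * x ^ 2) * (1 / x ^ 2) := by gcongr
    _ = _ := mul_one_div _ _

theorem tendsto_parabolaSum_curve :
    Tendsto (fun ε => parabolaSum ε (1 - ε ^ 3)) (𝓝[>] 0) (𝓝 ⊤) := by
  have hz : Tendsto (fun ε : ℝ => 1 / (4 * ε)) (𝓝[>] 0) atTop := by
    simpa [mul_comm] using tendsto_inv_nhdsGT_zero.atTop_mul_const (by norm_num : (0 : ℝ) < 4⁻¹)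
  -- with `z = 1 / (4 ε)` the lower bound of `parabolaSum_curve_ge` is `e⁻¹ / 576 * e ^ z / z ^ 4`
  have hbound : Tendsto (fun ε => exp (1 / (4 * ε) - 1) * (4 * ε ^ 4 / 9)) (𝓝[>] 0) atTop := by
    refine (((tendsto_exp_div_pow_atTop 4).comp hz).const_mul_atTop
      (by positivity : 0 < (exp 1)⁻¹ / 576)).congr' ?_
    filter_upwards [self_mem_nhdsWithin] with ε (hε : 0 < ε)
    simp only [Function.comp_apply, exp_sub]
    field_simp
    ring
  refine tendsto_nhds_top_mono (ENNReal.tendsto_ofReal_atTop.comp hbound) ?_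
  filter_upwards [Ioo_mem_nhdsGT zero_lt_one] with ε hε
  exact parabolaSum_curve_ge hε.1 hε.2.le

def dot (w ξ : ℝ × ℝ × ℝ × ℝ) : ℝ :=
  w.1 * ξ.1 + w.2.1 * ξ.2.1 + w.2.2.1 * ξ.2.2.1 + w.2.2.2 * ξ.2.2.2

noncomputable def atom (k : ℕ × ℕ) : ℝ × ℝ × ℝ × ℝ :=
  ((k.1 : ℝ) + 1, ((k.1 : ℝ) + 1) ^ 2, (k.2 : ℝ) + 1, 0)

noncomputable def weight (k : ℕ × ℕ) : ℝ≥0∞ :=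
  ENNReal.ofReal (exp (-((k.1 : ℝ) + 1) ^ 2) / ((k.1 : ℝ) + 1) ^ 2) *
    ENNReal.ofReal (exp (-((k.2 : ℝ) + 1)) / ((k.2 : ℝ) + 1) ^ 2)

noncomputable def baseMeasure : Measure (ℝ × ℝ × ℝ × ℝ) :=
  Measure.sum fun k => weight k • Measure.dirac (atom k)

theorem lintegral_exp_dot_baseMeasure (u v s r : ℝ) :
    ∫⁻ ξ, ENNReal.ofReal (exp (dot (u, v, s, r) ξ)) ∂baseMeasure =
      parabolaSum u v * raySum s := by
  rw [parabolaSum, raySum, expSum, expSum, ENNReal.tsum_mul_tsum, baseMeasure,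
    lintegral_sum_measure]
  refine tsum_congr fun k => ?_
  rw [lintegral_smul_measure, lintegral_dirac, smul_eq_mul, weight,
    ← ENNReal.ofReal_mul (by positivity), ← ENNReal.ofReal_mul (by positivity),
    ← ENNReal.ofReal_mul (by positivity)]
  congr 1
  simp only [dot, atom]
  field_simp
  simp only [← exp_add]
  ring_nf

theorem baseMeasure_univ : baseMeasure univ = parabolaSum 0 0 * raySum 0 := by
  simpa [dot] using lintegral_exp_dot_baseMeasure 0 0 0 0

theorem baseMeasure_univ_ne_zero : baseMeasure univ ≠ 0 := by
  rw [baseMeasure_univ]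
  exact mul_ne_zero (expSum_ne_zero _) (expSum_ne_zero _)

theorem baseMeasure_univ_ne_top : baseMeasure univ ≠ ⊤ := by
  rw [baseMeasure_univ]
  exact (ENNReal.mul_lt_top (parabolaSum_lt_top_of_lt_one 0 zero_lt_one)
    (raySum_lt_top zero_le_one)).ne

noncomputable def blowupMeasure : Measure (ℝ × ℝ × ℝ × ℝ) :=
  (baseMeasure univ)⁻¹ • baseMeasure

instance : IsProbabilityMeasure blowupMeasure :=
  ⟨by simp [blowupMeasure,
    ENNReal.inv_mul_cancel baseMeasure_univ_ne_zero baseMeasure_univ_ne_top]⟩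

noncomputable def blowupMgf (w : ℝ × ℝ × ℝ × ℝ) : ℝ≥0∞ :=
  ∫⁻ ξ, ENNReal.ofReal (exp (dot w ξ)) ∂blowupMeasure

theorem blowupMgf_apply (u v s r : ℝ) :
    blowupMgf (u, v, s, r) = (baseMeasure univ)⁻¹ * (parabolaSum u v * raySum s) := by
  rw [blowupMgf, blowupMeasure, lintegral_smul_measure, lintegral_exp_dot_baseMeasure, smul_eq_mul]

theorem blowupMgf_eq_top (u v : ℝ) {s : ℝ} (hs : 1 < s) (r : ℝ) :
    blowupMgf (u, v, s, r) = ⊤ := by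
  rw [blowupMgf_apply, raySum_eq_top hs,
    ENNReal.mul_top (a := parabolaSum u v) (expSum_ne_zero _),
    ENNReal.mul_top (ENNReal.inv_ne_zero.mpr baseMeasure_univ_ne_top)]

def blowupCurve (t : ℝ) : ℝ × ℝ × ℝ × ℝ := (1 - t, 1 - (1 - t) ^ 3, 1, 0)

theorem continuous_blowupCurve : Continuous blowupCurve := by
  unfold blowupCurve
  fun_prop

theorem blowupMgf_curve_lt_top {t : ℝ} (ht : t ≤ 1) : blowupMgf (blowupCurve t) < ⊤ := by
  rw [blowupCurve, blowupMgf_apply]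
  exact ENNReal.mul_lt_top
    (ENNReal.inv_lt_top.mpr (pos_iff_ne_zero.mpr baseMeasure_univ_ne_zero))
    (ENNReal.mul_lt_top (parabolaSum_curve_lt_top (sub_nonneg.mpr ht)) (raySum_lt_top le_rfl))

theorem blowupCurve_mem_frontier {t : ℝ} (ht : t ≤ 1) :
    blowupCurve t ∈ frontier {w | blowupMgf w < ⊤} := by
  refine ⟨subset_closure (blowupMgf_curve_lt_top ht), fun hint => ?_⟩
  have hlim : Tendsto (fun s => (1 - t, 1 - (1 - t) ^ 3, s, (0 : ℝ))) (𝓝[>] 1)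
      (𝓝 (blowupCurve t)) :=
    (Continuous.tendsto (by fun_prop) 1).mono_left nhdsWithin_le_nhds
  have hnear : ∀ᶠ s in 𝓝[>] 1,
      (1 - t, 1 - (1 - t) ^ 3, s, (0 : ℝ)) ∈ {w | blowupMgf w < ⊤} :=
    hlim.eventually (mem_interior_iff_mem_nhds.mp hint)
  obtain ⟨s, hs_lt, hs⟩ := (hnear.and self_mem_nhdsWithin).exists
  exact (blowupMgf_eq_top _ _ hs _).not_lt hs_lt

theorem tendsto_blowupMgf_curve :
    Tendsto (fun t => blowupMgf (blowupCurve t)) (𝓝[<] 1) (𝓝 ⊤) := by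
  have hε : Tendsto (fun t : ℝ => 1 - t) (𝓝[<] 1) (𝓝[>] 0) := by
    refine tendsto_nhdsWithin_of_tendsto_nhds_of_eventually_within _ ?_ ?_
    · exact ((by fun_prop : Continuous fun t : ℝ => 1 - t).tendsto' 1 0 (sub_self 1)).mono_left
        nhdsWithin_le_nhds
    · filter_upwards [self_mem_nhdsWithin] with t (ht : t < 1)
      exact sub_pos.mpr ht
  have hlim := ENNReal.Tendsto.const_mul
    (ENNReal.Tendsto.mul_const (tendsto_parabolaSum_curve.comp hε)
      (Or.inr (raySum_lt_top le_rfl).ne))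
    (Or.inr (ENNReal.inv_ne_top.mpr baseMeasure_univ_ne_zero))
  rw [ENNReal.top_mul (a := raySum 1) (expSum_ne_zero _),
    ENNReal.mul_top (ENNReal.inv_ne_zero.mpr baseMeasure_univ_ne_top)] at hlim
  simpa only [blowupCurve, blowupMgf_apply, Function.comp_apply] using hlim

end MgfBlowup

theorem exists_mgf_blowup_curve_along_boundary :
    ∃ μ : Measure (ℝ × ℝ × ℝ × ℝ), IsProbabilityMeasure μ ∧
      ∀ G : ℝ × ℝ × ℝ × ℝ → ℝ≥0∞,
        (∀ w, G w = ∫⁻ ξ, ENNReal.ofReal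
            (Real.exp (w.1 * ξ.1 + w.2.1 * ξ.2.1 + w.2.2.1 * ξ.2.2.1 +
              w.2.2.2 * ξ.2.2.2)) ∂μ) →
        ∃ c : ℝ → ℝ × ℝ × ℝ × ℝ, ContinuousOn c (Icc 0 1) ∧
          (∀ t ∈ Icc (0 : ℝ) 1, c t ∈ frontier {w | G w < ⊤}) ∧
          (∀ t ∈ Ico (0 : ℝ) 1, c t ∈ {w | G w < ⊤}) ∧
          c 1 ∈ {w | G w < ⊤} ∧ G (c 1) < ⊤ ∧
          Tendsto (fun t => G (c t)) (𝓝[Ico (0 : ℝ) 1] 1) (𝓝 ⊤) := by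
  open MgfBlowup in
  refine ⟨blowupMeasure, inferInstance, fun G hG => ?_⟩
  obtain rfl : G = blowupMgf := funext hG
  exact ⟨blowupCurve, continuous_blowupCurve.continuousOn,
    fun t ht => blowupCurve_mem_frontier ht.2,
    fun t ht => blowupMgf_curve_lt_top ht.2.le,
    blowupMgf_curve_lt_top le_rfl, blowupMgf_curve_lt_top le_rfl,
    tendsto_blowupMgf_curve.mono_left (nhdsWithin_mono _ Ico_subset_Iio_self)⟩
end
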